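/- arXiv:2404.08178 — 4 statements merged into one kernel-verified Lean document; each statement's English description precedes it below -/
import Mathlib

section
/- Let f̃: ℝ → ℝ, λ > 0, and define f(α) = f̃(α) + λ·𝟙[α ≠ 0], where 𝟙[α ≠ 0] is 1 for α ≠ 0 and 0 for α = 0. Then the Fenchel conjugate satisfies f*(β) = max{-f̃(0), f̃*(β) - λ} for all β ∈ ℝ. -/
/-!
Split the supremum defining `f*(β)` at `α = 0`. The point `0` contributes `-f̃(0)`; away from `0`
the objective is `βα - f̃(α) - λ`, and since it is continuous and `0` is not isolated, dropping the
single point `0` does not change its supremum, which is `f̃*(β) - λ`.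
-/

open Filter Topology

theorem iSup_ne_eq_iSup_of_continuousAt {X α : Type*} [TopologicalSpace X] [CompleteLattice α]
    [TopologicalSpace α] [ClosedIicTopology α] {g : X → α} {x : X} [(𝓝[≠] x).NeBot]
    (hg : ContinuousAt g x) : ⨆ (y) (_ : y ≠ x), g y = ⨆ y, g y := by
  rw [iSup_split_single g x, eq_comm, sup_eq_right]
  have hlim : Tendsto g (𝓝[≠] x) (𝓝 (g x)) := hg.mono_left nhdsWithin_le_nhds
  exact le_of_tendsto hlim (eventually_nhdsWithin_of_forall fun y hy => le_iSup₂_of_le y hy le_rfl)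

theorem EReal.iSup_sub_coe {ι : Sort*} (u : ι → EReal) (c : ℝ) :
    ⨆ i, (u i - c) = (⨆ i, u i) - c := by
  refine le_antisymm (iSup_le fun i => EReal.sub_le_sub (le_iSup u i) le_rfl) ?_
  refine EReal.sub_le_of_le_add (iSup_le fun i => ?_)
  calc u i = u i - c + c := EReal.sub_add_cancel.symm
    _ ≤ (⨆ j, (u j - c)) + c := add_le_add_left (le_iSup (fun j => u j - c) i) _

theorem stmt_4_general (ftil : ℝ → ℝ) (hcont : Continuous ftil) (lam : ℝ)
    (f : ℝ → ℝ) (hf : ∀ α : ℝ, f α = ftil α + if α = 0 then 0 else lam) (β : ℝ) :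
    (⨆ α : ℝ, ((β * α - f α : ℝ) : EReal)) =
      max ((-ftil 0 : ℝ) : EReal)
        ((⨆ α : ℝ, ((β * α - ftil α : ℝ) : EReal)) - (lam : EReal)) := by
  have hshifted : Continuous fun α : ℝ => ((β * α - ftil α - lam : ℝ) : EReal) :=
    continuous_coe_real_ereal.comp (by fun_prop)
  have hsplit : ⨆ α : ℝ, ((β * α - f α : ℝ) : EReal) =
      ((-ftil 0 : ℝ) : EReal) ⊔ ⨆ (α) (_ : α ≠ 0), ((β * α - ftil α - lam : ℝ) : EReal) := by
    rw [iSup_split_single _ 0]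
    congr 1
    · simp [hf]
    · refine iSup_congr fun α => iSup_congr fun hα => ?_
      rw [hf α, if_neg hα, sub_add_eq_sub_sub]
  rw [hsplit, iSup_ne_eq_iSup_of_continuousAt hshifted.continuousAt, ← EReal.iSup_sub_coe]
  simp only [EReal.coe_sub]

/-- For `f(α) = f̃(α) + λ·𝟙[α ≠ 0]` with `f̃` continuous and `λ > 0`, the Fenchel
conjugate satisfies `f*(β) = max{-f̃(0), f̃*(β) - λ}` (in the extended reals). -/
theorem stmt_4 (ftil : ℝ → ℝ) (hcont : Continuous ftil) (lam : ℝ) (hlam : 0 < lam)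
    (f : ℝ → ℝ) (hf : ∀ α : ℝ, f α = ftil α + if α = 0 then 0 else lam) (β : ℝ) :
    (⨆ α : ℝ, ((β * α - f α : ℝ) : EReal)) =
      max ((-ftil 0 : ℝ) : EReal)
        ((⨆ α : ℝ, ((β * α - ftil α : ℝ) : EReal)) - (lam : EReal)) :=
  stmt_4_general ftil hcont lam f hf β
end

section
/- Let p_k and p_l be two strongly convex quadratic functions and let intervals [τ_{k-1}, τ_k] and [τ_{l-1}, τ_l] satisfy τ_k ≤ τ_{l-1}. Then there is at most one line ℓ(α) = sα + b that is tangent to p_k at some point α_k ∈ [τ_{k-1}, τ_k] and tangent to p_l at some point α_l ∈ [τ_{l-1}, τ_l]. -/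
/-- Characterization of a tangent line to a strongly convex quadratic. -/
lemma tan_char (a b c s bb α0 : ℝ) (ha : 0 < a)
    (heq : s * α0 + bb = a * α0 ^ 2 + b * α0 + c)
    (hle : ∀ α : ℝ, s * α + bb ≤ a * α ^ 2 + b * α + c) :
    s = 2 * a * α0 + b ∧ bb = c - a * α0 ^ 2 := by
  have ha' : (2 : ℝ) * a ≠ 0 := by positivity
  obtain ⟨t, ht⟩ : ∃ t : ℝ, t * (2 * a) = s - (2 * a * α0 + b) :=
    ⟨(s - (2 * a * α0 + b)) / (2 * a), by field_simp⟩
  have h := hle (α0 + t)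
  have hq : 0 ≤ (2 * a * α0 + b - s) * t + a * t ^ 2 := by nlinarith [h, heq]
  have h2 : (s - (2 * a * α0 + b)) * t = 2 * a * t ^ 2 := by linear_combination -t * ht
  have ht2 : a * t ^ 2 ≤ 0 := by nlinarith [hq, h2]
  have h3 : a * t ^ 2 = 0 := le_antisymm ht2 (mul_nonneg ha.le (sq_nonneg t))
  have ht0 : t = 0 := by
    rcases mul_eq_zero.mp h3 with h' | h'
    · exact absurd h' (ne_of_gt ha)
    · exact pow_eq_zero_iff (by norm_num) |>.mp h' 
  have hs : s = 2 * a * α0 + b := by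
    have := ht
    rw [ht0] at this
    linarith
  exact ⟨hs, by linear_combination heq - α0 * hs⟩

/-- Two strongly convex quadratic pieces over ordered intervals have at most one
feasible common tangent line. A line is tangent to the convex quadratic `p` at `α₀`
iff it underestimates `p` everywhere and agrees at `α₀`. -/
theorem stmt_7 (ak bk ck al bl cl : ℝ) (hak : 0 < ak) (hal : 0 < al)
    (τk1 τk τl1 τl : ℝ) (hsep : τk ≤ τl1)
    (s1 bb1 s2 bb2 αk1 αl1 αk2 αl2 : ℝ)
    (h1k : αk1 ∈ Set.Icc τk1 τk) (h1l : αl1 ∈ Set.Icc τl1 τl)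
    (h2k : αk2 ∈ Set.Icc τk1 τk) (h2l : αl2 ∈ Set.Icc τl1 τl)
    (h1ktan : s1 * αk1 + bb1 = ak * αk1 ^ 2 + bk * αk1 + ck ∧
      ∀ α : ℝ, s1 * α + bb1 ≤ ak * α ^ 2 + bk * α + ck)
    (h1ltan : s1 * αl1 + bb1 = al * αl1 ^ 2 + bl * αl1 + cl ∧
      ∀ α : ℝ, s1 * α + bb1 ≤ al * α ^ 2 + bl * α + cl)
    (h2ktan : s2 * αk2 + bb2 = ak * αk2 ^ 2 + bk * αk2 + ck ∧
      ∀ α : ℝ, s2 * α + bb2 ≤ ak * α ^ 2 + bk * α + ck)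
    (h2ltan : s2 * αl2 + bb2 = al * αl2 ^ 2 + bl * αl2 + cl ∧
      ∀ α : ℝ, s2 * α + bb2 ≤ al * α ^ 2 + bl * α + cl) :
    s1 = s2 ∧ bb1 = bb2 := by
  obtain ⟨e1ks, e1kb⟩ := tan_char ak bk ck s1 bb1 αk1 hak h1ktan.1 h1ktan.2
  obtain ⟨e1ls, e1lb⟩ := tan_char al bl cl s1 bb1 αl1 hal h1ltan.1 h1ltan.2
  obtain ⟨e2ks, e2kb⟩ := tan_char ak bk ck s2 bb2 αk2 hak h2ktan.1 h2ktan.2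
  obtain ⟨e2ls, e2lb⟩ := tan_char al bl cl s2 bb2 αl2 hal h2ltan.1 h2ltan.2
  obtain ⟨_, hk1⟩ := h1k
  obtain ⟨hl1, _⟩ := h1l
  obtain ⟨_, hk2⟩ := h2k
  obtain ⟨hl2, _⟩ := h2l
  have hA : 2 * ak * (αk1 - αk2) = s1 - s2 := by linarith
  have hB : 2 * al * (αl1 - αl2) = s1 - s2 := by linarith
  have hC : ak * (αk1 ^ 2 - αk2 ^ 2) = al * (αl1 ^ 2 - αl2 ^ 2) := by linarith
  have hsum : (s1 - s2) * (αk1 + αk2 - αl1 - αl2) = 0 := by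
    linear_combination (αl1 + αl2) * hB - (αk1 + αk2) * hA + 2 * hC
  have hs : s1 = s2 := by
    rcases mul_eq_zero.mp hsum with h | h
    · linarith
    · have h1 : αk1 = τk := by linarith
      have h2 : αk2 = τk := by linarith
      rw [h1, h2] at hA
      linarith
  refine ⟨hs, ?_⟩
  have h0 : (2 * ak) * (αk1 - αk2) = 0 := by rw [hs] at hA; linear_combination hA
  rcases mul_eq_zero.mp h0 with h | h
  · linarith
  · have : αk1 = αk2 := by linarith
    rw [this] at e1kb
    linarith
end

section
/- Let g be a consistent piecewise quadratic with N pieces. Define the indexing function I_g(β) = min{ k : ∃ α* ∈ argmax_α (βα - g(α)) with τ_{k-1} ≤ α* ≤ τ_k }. Then I_g is non-decreasing in β. -/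
/-- The indexing function of a consistent piecewise quadratic — the least index `k`
such that some maximizer of `βα - g(α)` lies in the `k`-th piece interval — is
non-decreasing in `β`. -/
theorem stmt_15 (N : ℕ) (hN : 0 < N)
    (τ : Fin (N + 1) → EReal) (hτ : StrictMono τ)
    (hτ0 : τ 0 = ⊥) (hτN : τ (Fin.last N) = ⊤)
    (a b c : Fin N → ℝ) (ha : ∀ k, 0 < a k)
    (g : ℝ → ℝ)
    (hagree : ∀ (k : Fin N) (α : ℝ), τ k.castSucc ≤ (α : EReal) → (α : EReal) ≤ τ k.succ →
      g α = a k * α ^ 2 + b k * α + c k)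
    (hmin : ∀ (α : ℝ) (k : Fin N), g α ≤ a k * α ^ 2 + b k * α + c k)
    (hdist : ∀ i j : Fin N, (i : ℕ) + 1 = (j : ℕ) → (a i, b i, c i) ≠ (a j, b j, c j))
    (β β' : ℝ) (hββ' : β < β') (k k' : Fin N)
    (hk : IsLeast {j : Fin N | ∃ αs : ℝ, (∀ α : ℝ, β * α - g α ≤ β * αs - g αs) ∧
      τ j.castSucc ≤ (αs : EReal) ∧ (αs : EReal) ≤ τ j.succ} k)
    (hk' : IsLeast {j : Fin N | ∃ αs : ℝ, (∀ α : ℝ, β' * α - g α ≤ β' * αs - g αs) ∧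
      τ j.castSucc ≤ (αs : EReal) ∧ (αs : EReal) ≤ τ j.succ} k') :
    k ≤ k' := by
  by_contra hlt
  push_neg at hlt
  obtain ⟨αs, hmax, h1, h2⟩ := hk.1
  obtain ⟨αs', hmax', h1', h2'⟩ := hk'.1
  -- αs ≤ αs'
  have hle : αs ≤ αs' := by
    have A := hmax αs'
    have B := hmax' αs
    nlinarith
  -- from k' < k : αs' ≤ αs
  have hsucc : k'.succ ≤ k.castSucc := by
    simp only [Fin.le_def, Fin.lt_def, Fin.val_succ, Fin.coe_castSucc] at hlt ⊢
    omega
  have hge : (αs' : EReal) ≤ (αs : EReal) :=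
    le_trans h2' (le_trans (hτ.monotone hsucc) h1)
  have heq : αs = αs' := le_antisymm hle (by exact_mod_cast hge)
  have : k ≤ k' := hk.2 ⟨αs, hmax, heq ▸ h1', heq ▸ h2'⟩
  exact absurd this (not_le.mpr hlt)
end

section
/- Let g be a consistent piecewise quadratic with pieces p₁,...,p_N and indexing function I_g. Then g*(β) = p_{I_g(β)}*(β) for every β ∈ ℝ, where g* and p_k* denote Fenchel conjugates. -/
/-
Each piece's conjugate is explicit: completing the square shows that `βα - p_k(α)` is maximised
at `α = (β - b_k) / (2 a_k)` with value `(β - b_k)² / (4 a_k) - c_k`. Since `g ≤ p_k`, we get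
`p_k* ≤ g*`; conversely, `k = I_g(β)` provides a maximiser of `βα - g(α)` on which `g = p_k`,
so `g*(β) ≤ p_k*(β)`.
-/

theorem isGreatest_conjugate_quadratic {a : ℝ} (ha : 0 < a) (b c β : ℝ) :
    IsGreatest {y : ℝ | ∃ α : ℝ, y = β * α - (a * α ^ 2 + b * α + c)}
      ((β - b) ^ 2 / (4 * a) - c) := by
  have hsq : ∀ α : ℝ, β * α - (a * α ^ 2 + b * α + c)
      = (β - b) ^ 2 / (4 * a) - c - a * (α - (β - b) / (2 * a)) ^ 2 := by
    intro α
    field_simp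
    ring
  refine ⟨⟨(β - b) / (2 * a), by rw [hsq]; ring⟩, ?_⟩
  rintro y ⟨α, rfl⟩
  rw [hsq]
  nlinarith [mul_nonneg ha.le (sq_nonneg (α - (β - b) / (2 * a)))]

theorem isGreatest_conjugate_of_le_of_eq_at_max {g p : ℝ → ℝ} {β αs M : ℝ}
    (hle : ∀ α, g α ≤ p α) (hmax : ∀ α, β * α - g α ≤ β * αs - g αs) (heq : g αs = p αs)
    (hp : IsGreatest {y : ℝ | ∃ α : ℝ, y = β * α - p α} M) :
    IsGreatest {y : ℝ | ∃ α : ℝ, y = β * α - g α} M := by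
  obtain ⟨⟨α₀, rfl⟩, hpM⟩ := hp
  have hαs_eq : β * αs - g αs = β * α₀ - p α₀ := by
    refine le_antisymm ?_ ?_
    · rw [heq]
      exact hpM ⟨αs, rfl⟩
    · linarith [hle α₀, hmax α₀]
  refine ⟨⟨αs, hαs_eq.symm⟩, ?_⟩
  rintro y ⟨α, rfl⟩
  exact hαs_eq ▸ hmax α

theorem stmt_16_general (N : ℕ)
    (τ : Fin (N + 1) → EReal)
    (a b c : Fin N → ℝ) (ha : ∀ k, 0 < a k)
    (g : ℝ → ℝ)
    (hagree : ∀ (k : Fin N) (α : ℝ), τ k.castSucc ≤ (α : EReal) → (α : EReal) ≤ τ k.succ →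
      g α = a k * α ^ 2 + b k * α + c k)
    (hmin : ∀ (α : ℝ) (k : Fin N), g α ≤ a k * α ^ 2 + b k * α + c k)
    (β : ℝ) (kβ : Fin N)
    (hkβ : IsLeast {j : Fin N | ∃ αs : ℝ, (∀ α : ℝ, β * α - g α ≤ β * αs - g αs) ∧
      τ j.castSucc ≤ (αs : EReal) ∧ (αs : EReal) ≤ τ j.succ} kβ) :
    IsGreatest {y : ℝ | ∃ α : ℝ, y = β * α - g α}
      ((β - b kβ) ^ 2 / (4 * a kβ) - c kβ) := by
  obtain ⟨⟨αs, hmax, hlo, hhi⟩, -⟩ := hkβ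
  exact isGreatest_conjugate_of_le_of_eq_at_max (hmin · kβ) hmax (hagree kβ αs hlo hhi)
    (isGreatest_conjugate_quadratic (ha kβ) (b kβ) (c kβ) β)

/-- For a consistent piecewise quadratic `g` with indexing function value `kβ` at `β`,
the conjugate satisfies `g*(β) = p_{kβ}*(β)` (and the supremum is attained). -/
theorem stmt_16 (N : ℕ) (hN : 0 < N)
    (τ : Fin (N + 1) → EReal) (hτ : StrictMono τ)
    (hτ0 : τ 0 = ⊥) (hτN : τ (Fin.last N) = ⊤)
    (a b c : Fin N → ℝ) (ha : ∀ k, 0 < a k)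
    (g : ℝ → ℝ)
    (hagree : ∀ (k : Fin N) (α : ℝ), τ k.castSucc ≤ (α : EReal) → (α : EReal) ≤ τ k.succ →
      g α = a k * α ^ 2 + b k * α + c k)
    (hmin : ∀ (α : ℝ) (k : Fin N), g α ≤ a k * α ^ 2 + b k * α + c k)
    (β : ℝ) (kβ : Fin N)
    (hkβ : IsLeast {j : Fin N | ∃ αs : ℝ, (∀ α : ℝ, β * α - g α ≤ β * αs - g αs) ∧
      τ j.castSucc ≤ (αs : EReal) ∧ (αs : EReal) ≤ τ j.succ} kβ) :
    IsGreatest {y : ℝ | ∃ α : ℝ, y = β * α - g α}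
      ((β - b kβ) ^ 2 / (4 * a kβ) - c kβ) :=
  stmt_16_general N τ a b c ha g hagree hmin β kβ hkβ
end
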